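/- Let μ⁰ > 0, λ > 0 and let C be an n×n real symmetric matrix. Let S⁰ be the unique minimizer over symmetric positive definite matrices of (1/2)‖S − C‖_F² − μ⁰ log det S, and set Z⁰ = (S⁰ − C)/λ. Then S⁰ is positive definite, Z⁰ = (μ⁰/λ)(S⁰)⁻¹ is positive definite, S⁰ Z⁰ = (μ⁰/λ)·I, and tr(S⁰ Z⁰) = n μ⁰/λ. -/

import Mathlib

/-!
Everything follows from the optimality condition `S⁰ − C = μ⁰ (S⁰)⁻¹`. Positive definite
matrices are open among symmetric ones, so for every symmetric `H` the function
`t ↦ F(S⁰ + t H)` has a local minimum at `0`. Since `d/dt log det (S + t H) = tr(S⁻¹ H)` at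
`t = 0`, its derivative there is `tr(G H)` with `G = S⁰ − C − μ⁰ (S⁰)⁻¹`, and the choice `H = G`
gives `‖G‖_F² = 0`.
-/

open Matrix

/-- The smoothing objective for the positive semidefinite cone:
`F_μ(X) = (1/2)‖X − C‖_F² − μ log det X`, with the Frobenius norm squared
expressed via the trace inner product as `tr((X − C)(X − C)ᵀ)`. -/
noncomputable def psdObj (n : ℕ) (μ : ℝ) (C X : Matrix (Fin n) (Fin n) ℝ) : ℝ :=
  (1 / 2) * Matrix.trace ((X - C) * (X - C)ᵀ) - μ * Real.log X.det

open Filter Topology Polynomial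

theorem Matrix.PosDef.eventually_add_smul {n : Type*} [Fintype n] {S H : Matrix n n ℝ}
    (hS : S.PosDef) (hH : H.IsHermitian) : ∀ᶠ t in 𝓝 (0 : ℝ), (S + t • H).PosDef := by
  set Q : ℝ → (n → ℝ) → ℝ := fun t x => x ⬝ᵥ (S + t • H) *ᵥ x
  have hQ : Continuous fun p : ℝ × (n → ℝ) => Q p.1 p.2 := by
    simp only [Q, add_mulVec, smul_mulVec, dotProduct_add, dotProduct_smul, smul_eq_mul]
    fun_prop
  -- Tube lemma: positivity at `t = 0` propagates uniformly over the compact unit sphere.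
  have hsphere : ∀ᶠ t in 𝓝 (0 : ℝ), ∀ x ∈ Metric.sphere (0 : n → ℝ) 1, 0 < Q t x := by
    refine (isCompact_sphere 0 1).eventually_forall_of_forall_eventually fun x hx => ?_
    refine continuousAt_const.eventually_lt hQ.continuousAt ?_
    simpa [Q] using hS.dotProduct_mulVec_pos (ne_zero_of_mem_unit_sphere ⟨x, hx⟩)
  filter_upwards [hsphere] with t ht
  refine .of_dotProduct_mulVec_pos (hS.isHermitian.add (hH.smul (.all t))) fun x hx => ?_
  have hnx : ‖x‖ ≠ 0 := norm_ne_zero_iff.mpr hx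
  have hunit : 0 < ‖x‖⁻¹ * (‖x‖⁻¹ * Q t x) := by
    simpa only [Q, mulVec_smul, dotProduct_smul, smul_dotProduct, smul_eq_mul]
      using ht (‖x‖⁻¹ • x) (by simp [norm_smul, hnx])
  rw [star_trivial]
  exact pos_of_mul_pos_right (pos_of_mul_pos_right hunit (by positivity)) (by positivity)

theorem hasDerivAt_det_one_add_smul {𝕜 n : Type*} [NontriviallyNormedField 𝕜] [Fintype n]
    [DecidableEq n] (M : Matrix n n 𝕜) :
    HasDerivAt (fun t : 𝕜 => (1 + t • M).det) M.trace 0 := by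
  set P : 𝕜[X] := det (1 + (X : 𝕜[X]) • M.map C)
  have hP : (fun t : 𝕜 => (1 + t • M).det) = fun t => P.eval t := by
    ext t
    simp [P, eval_det, ← smul_eq_mul_diagonal]
  rw [hP, ← derivative_det_one_add_X_smul M]
  exact P.hasDerivAt 0

theorem hasDerivAt_det_add_smul {𝕜 n : Type*} [NontriviallyNormedField 𝕜] [Fintype n]
    [DecidableEq n] {S : Matrix n n 𝕜} (hS : IsUnit S.det) (H : Matrix n n 𝕜) :
    HasDerivAt (fun t : 𝕜 => (S + t • H).det) (S.det * (S⁻¹ * H).trace) 0 := by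
  have hfactor : ∀ t : 𝕜, S + t • H = S * (1 + t • (S⁻¹ * H)) := fun t => by
    rw [Matrix.mul_add, Matrix.mul_one, Matrix.mul_smul, ← Matrix.mul_assoc,
      mul_nonsing_inv _ hS, Matrix.one_mul]
  simp only [hfactor, det_mul]
  exact (hasDerivAt_det_one_add_smul _).const_mul _

theorem hasDerivAt_log_det_add_smul {n : Type*} [Fintype n] [DecidableEq n]
    {S : Matrix n n ℝ} (hS : S.det ≠ 0) (H : Matrix n n ℝ) :
    HasDerivAt (fun t : ℝ => Real.log (S + t • H).det) (S⁻¹ * H).trace 0 := by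
  simpa [hS] using (hasDerivAt_det_add_smul hS.isUnit H).log (by simpa using hS)

theorem hasDerivAt_trace_mul_transpose_add_smul {𝕜 n : Type*} [NontriviallyNormedField 𝕜]
    [Fintype n] (D H : Matrix n n 𝕜) :
    HasDerivAt (fun t : 𝕜 => ((D + t • H) * (D + t • H)ᵀ).trace) (2 * (D * Hᵀ).trace) 0 := by
  have hexpand : ∀ t : 𝕜, ((D + t • H) * (D + t • H)ᵀ).trace
      = (D * Dᵀ).trace + t * (2 * (D * Hᵀ).trace) + t ^ 2 * (H * Hᵀ).trace := fun t => by
    have hcross : (H * Dᵀ).trace = (D * Hᵀ).trace := by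
      rw [← trace_transpose, transpose_mul, transpose_transpose]
    simp only [transpose_add, transpose_smul, Matrix.add_mul, Matrix.mul_add, Matrix.smul_mul,
      Matrix.mul_smul, trace_add, trace_smul, smul_eq_mul, hcross]
    ring
  simp only [hexpand]
  simpa using (((hasDerivAt_id (0 : 𝕜)).mul_const (2 * (D * Hᵀ).trace)).const_add
    (D * Dᵀ).trace).fun_add ((hasDerivAt_pow 2 (0 : 𝕜)).mul_const (H * Hᵀ).trace)

theorem hasDerivAt_psdObj_add_smul {n : ℕ} (μ : ℝ) (C : Matrix (Fin n) (Fin n) ℝ)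
    {S : Matrix (Fin n) (Fin n) ℝ} (hS : S.det ≠ 0) (H : Matrix (Fin n) (Fin n) ℝ) :
    HasDerivAt (fun t : ℝ => psdObj n μ C (S + t • H))
      (((S - C) * Hᵀ).trace - μ * (S⁻¹ * H).trace) 0 := by
  have hquad := (hasDerivAt_trace_mul_transpose_add_smul (S - C) H).const_mul (1 / 2 : ℝ)
  have hlog := (hasDerivAt_log_det_add_smul hS H).const_mul μ
  simp only [psdObj, add_sub_right_comm S]
  exact (hquad.fun_sub hlog).congr_deriv (by ring)

theorem sub_eq_smul_inv_of_psdObj_le {n : ℕ} {μ : ℝ} {C S : Matrix (Fin n) (Fin n) ℝ}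
    (hC : C.IsSymm) (hS : S.PosDef)
    (hmin : ∀ X : Matrix (Fin n) (Fin n) ℝ, X.IsSymm → X.PosDef →
      psdObj n μ C S ≤ psdObj n μ C X) :
    S - C = μ • S⁻¹ := by
  set G := S - C - μ • S⁻¹
  have hSsymm : S.IsSymm := isHermitian_iff_isSymm.mp hS.isHermitian
  have hGsymm : G.IsSymm := (hSsymm.sub hC).sub (hSsymm.inv.smul μ)
  have hloc : IsLocalMin (fun t : ℝ => psdObj n μ C (S + t • G)) 0 := by
    filter_upwards [hS.eventually_add_smul (isHermitian_iff_isSymm.mpr hGsymm)] with t ht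
    simpa using hmin _ (isHermitian_iff_isSymm.mp ht.isHermitian) ht
  have hstat := hloc.hasDerivAt_eq_zero (hasDerivAt_psdObj_add_smul μ C hS.det_pos.ne' G)
  have hGG : (G * Gᴴ).trace = 0 := by
    rw [hGsymm.eq] at hstat
    rw [conjTranspose_eq_transpose_of_trivial, hGsymm.eq]
    calc (G * G).trace = ((S - C) * G).trace - μ * (S⁻¹ * G).trace := by
          rw [Matrix.sub_mul, Matrix.smul_mul, trace_sub, trace_smul, smul_eq_mul]
      _ = 0 := hstat
  exact sub_eq_zero.mp (trace_mul_conjTranspose_self_eq_zero_iff.mp hGG)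

theorem stmt8_general (n : ℕ) (μ0 lam : ℝ) (hμ : 0 < μ0) (hlam : 0 < lam)
    (C S0 : Matrix (Fin n) (Fin n) ℝ) (hCs : C.IsSymm)
    (hS0 : S0.PosDef)
    (hmin : ∀ X : Matrix (Fin n) (Fin n) ℝ, X.IsSymm → X.PosDef →
      psdObj n μ0 C S0 ≤ psdObj n μ0 C X) :
    let Z0 : Matrix (Fin n) (Fin n) ℝ := lam⁻¹ • (S0 - C)
    S0.PosDef ∧ Z0 = (μ0 / lam) • S0⁻¹ ∧ Z0.PosDef ∧
    S0 * Z0 = (μ0 / lam) • (1 : Matrix (Fin n) (Fin n) ℝ) ∧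
    Matrix.trace (S0 * Z0) = n * μ0 / lam := by
  intro Z0
  have hZ : Z0 = (μ0 / lam) • S0⁻¹ := by
    simp only [Z0, sub_eq_smul_inv_of_psdObj_le hCs hS0 hmin, smul_smul, div_eq_inv_mul]
  have hSZ : S0 * Z0 = (μ0 / lam) • (1 : Matrix (Fin n) (Fin n) ℝ) := by
    rw [hZ, Matrix.mul_smul, mul_nonsing_inv _ hS0.det_pos.ne'.isUnit]
  refine ⟨hS0, hZ, hZ ▸ hS0.inv.smul (div_pos hμ hlam), hSZ, ?_⟩
  rw [hSZ, trace_smul, trace_one, Fintype.card_fin, smul_eq_mul]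
  ring

/-- Let `μ⁰ > 0`, `λ > 0`, `C` symmetric, let `S⁰` be the (unique) minimizer of
`(1/2)‖S − C‖_F² − μ⁰ log det S` over symmetric positive definite matrices, and
`Z⁰ = (S⁰ − C)/λ`. Then `S⁰` is positive definite, `Z⁰ = (μ⁰/λ)(S⁰)⁻¹` is positive
definite, `S⁰Z⁰ = (μ⁰/λ)·I`, and `tr(S⁰Z⁰) = n μ⁰/λ`. -/
theorem stmt8 (n : ℕ) (μ0 lam : ℝ) (hμ : 0 < μ0) (hlam : 0 < lam)
    (C S0 : Matrix (Fin n) (Fin n) ℝ) (hCs : C.IsSymm)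
    (hS0s : S0.IsSymm) (hS0 : S0.PosDef)
    (hmin : ∀ X : Matrix (Fin n) (Fin n) ℝ, X.IsSymm → X.PosDef →
      psdObj n μ0 C S0 ≤ psdObj n μ0 C X) :
    let Z0 : Matrix (Fin n) (Fin n) ℝ := lam⁻¹ • (S0 - C)
    S0.PosDef ∧ Z0 = (μ0 / lam) • S0⁻¹ ∧ Z0.PosDef ∧
    S0 * Z0 = (μ0 / lam) • (1 : Matrix (Fin n) (Fin n) ℝ) ∧
    Matrix.trace (S0 * Z0) = n * μ0 / lam :=
  stmt8_general n μ0 lam hμ hlam C S0 hCs hS0 hmin
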